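/- arXiv:2008.12856 — 4 statements merged into one kernel-verified Lean document; each statement's English description precedes it below -/
import Mathlib

section
/- Let u : ℕ → ℝ be a nonnegative sequence, let δ > 0 and β > 0, let γ : ℕ → ℝ be a nonnegative sequence with ∑_n γ(n) = ∞, let α : ℕ → ℝ be a sequence whose series of partial sums ∑_{n=0}^{m} α(n) converges to a finite limit as m → ∞, and let c : ℕ → ℝ be a sequence with c(n) → 0. Assume that for every n: (i) if u(n) > δ then u(n+1) ≤ u(n) − (β·γ(n) − α(n)); and (ii) if u(n) ≤ δ then u(n+1)² ≤ u(n)² + c(n). Then there exists n₀ such that u(n) ≤ 3δ for all n ≥ n₀. -/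
/-!
Above `δ` the sequence `u` decreases by `β γ(n) - α(n)`. Since `∑ γ = ∞` while `∑ α` converges, `u`
cannot stay above `δ` forever, so it returns below `δ` at some time after which all tails of `∑ α`
are smaller than `δ` and `c(n) < 3δ²`. From then on a step starting below `δ` lands below `2δ`
(as `u² ≤ δ² + 3δ²`), and during an excursion above `δ` the sequence grows by at most a tail of
`∑ α`, hence by less than `δ`.
-/

open Filter Finset

theorem le_add_sum_Ico_of_succ_le_add {u a : ℕ → ℝ} {N : ℕ}
    (h : ∀ n ≥ N, u (n + 1) ≤ u n + a n) : ∀ m ≥ N, u m ≤ u N + ∑ k ∈ Ico N m, a k := by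
  intro m hm
  induction m, hm using Nat.le_induction with
  | base => simp
  | succ m hm ih => rw [sum_Ico_succ_top hm]; linarith [h m hm]

theorem frequently_le_of_drift {u α γ : ℕ → ℝ} {δ β l : ℝ} (hu : ∀ n, 0 ≤ u n) (hβ : 0 < β)
    (hγ : Tendsto (fun m => ∑ n ∈ range m, γ n) atTop atTop)
    (hα : Tendsto (fun m => ∑ n ∈ range m, α n) atTop (nhds l))
    (hdrift : ∀ n, δ < u n → u (n + 1) ≤ u n - (β * γ n - α n)) :
    ∃ᶠ n in atTop, u n ≤ δ := by
  rw [frequently_atTop]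
  intro N
  by_contra! hN
  have hbound : ∀ m ≥ N, u m ≤ u N + ∑ k ∈ Ico N m, (α k - β * γ k) :=
    le_add_sum_Ico_of_succ_le_add fun n hn => by linarith [hdrift n (hN n hn)]
  have hsum : Tendsto (fun m => ∑ n ∈ range m, (α n - β * γ n)) atTop atBot := by
    simp only [sum_sub_distrib, ← mul_sum]
    exact (hα.add_atBot (tendsto_neg_atTop_atBot.comp (hγ.const_mul_atTop hβ))).congr
      fun m => (sub_eq_add_neg _ _).symm
  have hneg := (tendsto_atBot_add_const_left _ (u N - ∑ n ∈ range N, (α n - β * γ n))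
    hsum).eventually_lt_atBot 0
  obtain ⟨m, hm, hm_neg⟩ := ((eventually_ge_atTop N).and hneg).exists
  have hum := hbound m hm
  rw [sum_Ico_eq_sub _ hm] at hum
  linarith [hu m]

theorem exists_le_and_le_add_sum_Ico {u a : ℕ → ℝ} {δ η : ℝ} {n₀ : ℕ} (h₀ : u n₀ ≤ η)
    (hlow : ∀ n ≥ n₀, u n ≤ δ → u (n + 1) ≤ η)
    (hhigh : ∀ n ≥ n₀, δ < u n → u (n + 1) ≤ u n + a n) :
    ∀ n ≥ n₀, ∃ m ∈ Icc n₀ n, u m ≤ η ∧ u n ≤ u m + ∑ k ∈ Ico m n, a k := by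
  intro n hn
  induction n, hn using Nat.le_induction with
  | base => exact ⟨n₀, by simp, h₀, by simp⟩
  | succ n hn ih =>
    obtain ⟨m, hm, hum, hun⟩ := ih
    obtain ⟨hm₀, hmn⟩ := mem_Icc.1 hm
    by_cases hδn : u n ≤ δ
    · exact ⟨n + 1, mem_Icc.2 ⟨by omega, le_rfl⟩, hlow n hn hδn, by simp⟩
    · refine ⟨m, mem_Icc.2 ⟨hm₀, by omega⟩, hum, ?_⟩
      rw [sum_Ico_succ_top hmn]
      linarith [hhigh n hn (not_le.1 hδn)]

/-- The deterministic sequence lemma of the proof outline: if `u` is nonnegative,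
drifts down by `β·γ(n) − α(n)` whenever `u(n) > δ`, and satisfies
`u(n+1)² ≤ u(n)² + c(n)` whenever `u(n) ≤ δ`, where `∑ γ(n) = ∞`, the partial sums
of `α` converge, and `c(n) → 0`, then eventually `u(n) ≤ 3δ`. -/
theorem eventually_le_three_delta
    (u : ℕ → ℝ) (hu : ∀ n, 0 ≤ u n)
    (δ β : ℝ) (hδ : 0 < δ) (hβ : 0 < β)
    (γ : ℕ → ℝ) (hγ : ∀ n, 0 ≤ γ n)
    (hγdiv : Tendsto (fun m => ∑ n ∈ Finset.range m, γ n) atTop atTop)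
    (α : ℕ → ℝ)
    (hα : ∃ l : ℝ, Tendsto (fun m => ∑ n ∈ Finset.range m, α n) atTop (nhds l))
    (c : ℕ → ℝ) (hc : Tendsto c atTop (nhds 0))
    (h1 : ∀ n, δ < u n → u (n + 1) ≤ u n - (β * γ n - α n))
    (h2 : ∀ n, u n ≤ δ → u (n + 1) ^ 2 ≤ u n ^ 2 + c n) :
    ∃ n₀ : ℕ, ∀ n ≥ n₀, u n ≤ 3 * δ := by
  obtain ⟨l, hl⟩ := hα
  obtain ⟨N₁, hα_cauchy⟩ := Metric.cauchySeq_iff.1 hl.cauchySeq δ hδ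
  obtain ⟨N₂, hc_small⟩ :=
    eventually_atTop.1 (hc.eventually (gt_mem_nhds (by positivity : (0 : ℝ) < 3 * δ ^ 2)))
  obtain ⟨n₀, hu₀, hn₀⟩ := ((frequently_le_of_drift hu hβ hγdiv hl h1).and_eventually
    (eventually_ge_atTop (max N₁ N₂))).exists
  have hlow : ∀ n ≥ n₀, u n ≤ δ → u (n + 1) ≤ 2 * δ := fun n hn hun => by
    have hsq : u (n + 1) ^ 2 ≤ (2 * δ) ^ 2 := by
      nlinarith [h2 n hun, hc_small n (by omega), mul_nonneg (hu n) (sub_nonneg.2 hun)]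
    exact (sq_le_sq₀ (hu _) (by positivity)).1 hsq
  have hhigh : ∀ n ≥ n₀, δ < u n → u (n + 1) ≤ u n + α n := fun n _ hun => by
    linarith [h1 n hun, mul_nonneg hβ.le (hγ n)]
  refine ⟨n₀, fun n hn => ?_⟩
  obtain ⟨m, hm, hum, hun⟩ := exists_le_and_le_add_sum_Ico (by linarith) hlow hhigh n hn
  obtain ⟨hm₀, hmn⟩ := mem_Icc.1 hm
  have htail := hα_cauchy n (by omega) m (by omega)
  rw [Real.dist_eq, ← sum_Ico_eq_sub _ hmn] at htail
  linarith [(abs_lt.1 htail).2]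
end

section
/- Let u : ℕ → ℝ be a nonnegative sequence, let δ > 0, β > 0, and m ∈ ℕ. Let γ : ℕ → ℝ be a nonnegative sequence with ∑_n γ(n) = ∞, and let α : ℕ → ℝ be a sequence whose partial sums are bounded above, i.e., there is A ∈ ℝ with ∑_{n=m}^{m'} α(n) ≤ A for all m' ≥ m. Assume that for every n ≥ m, if u(n) > δ then u(n+1) ≤ u(n) − β·γ(n) + α(n). Then there exists n ≥ m with u(n) ≤ δ. -/
open Filter

/-! If `u` stayed above `δ` from time `m` on, the drift condition would telescope to
`u (m' + 1) ≤ u m - β ∑_{n=m}^{m'} γ n + A`, and the right-hand side tends to `-∞` because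
`∑ γ` diverges; this contradicts `0 ≤ u`. -/

namespace Finset

variable {M : Type*} [AddCommGroup M] [PartialOrder M] [IsOrderedAddMonoid M]

theorem le_add_sum_Ico_of_succ_le_add {u g : ℕ → M} {m N : ℕ} (hmN : m ≤ N)
    (h : ∀ n ∈ Ico m N, u (n + 1) ≤ u n + g n) : u N ≤ u m + ∑ n ∈ Ico m N, g n := by
  have : ∑ n ∈ Ico m N, (u (n + 1) - u n) ≤ ∑ n ∈ Ico m N, g n :=
    sum_le_sum fun n hn => sub_le_iff_le_add'.mpr (h n hn)
  rw [sum_Ico_sub u hmN] at this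
  exact sub_le_iff_le_add'.mp this

theorem tendsto_sum_Ico_atTop_of_tendsto_sum_range {γ : ℕ → M}
    (hγ : Tendsto (fun N => ∑ n ∈ range N, γ n) atTop atTop) (m : ℕ) :
    Tendsto (fun N => ∑ n ∈ Ico m N, γ n) atTop atTop := by
  refine (tendsto_atTop_add_const_right _ (-∑ n ∈ range m, γ n) hγ).congr' ?_
  filter_upwards [eventually_ge_atTop m] with N hN
  rw [sum_Ico_eq_sub _ hN, sub_eq_add_neg]

end Finset

theorem exists_return_below_delta_general
    (u : ℕ → ℝ) (hu : ∀ n, 0 ≤ u n)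
    (δ β : ℝ) (hβ : 0 < β) (m : ℕ)
    (γ : ℕ → ℝ)
    (hγdiv : Tendsto (fun m' => ∑ n ∈ Finset.range m', γ n) atTop atTop)
    (α : ℕ → ℝ) (A : ℝ)
    (hα : ∀ m' ≥ m, ∑ n ∈ Finset.Icc m m', α n ≤ A)
    (h1 : ∀ n ≥ m, δ < u n → u (n + 1) ≤ u n - β * γ n + α n) :
    ∃ n ≥ m, u n ≤ δ := by
  by_contra! h_above
  have hβγ : Tendsto (fun m' => β * ∑ n ∈ Finset.Ico m (m' + 1), γ n) atTop atTop :=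
    ((Finset.tendsto_sum_Ico_atTop_of_tendsto_sum_range hγdiv m).comp
      (tendsto_add_atTop_nat 1)).const_mul_atTop hβ
  obtain ⟨m', hm', hbig⟩ :=
    ((eventually_ge_atTop m).and (hβγ.eventually_gt_atTop (u m + A))).exists
  have hdrift : u (m' + 1) ≤ u m + ∑ n ∈ Finset.Ico m (m' + 1), (α n - β * γ n) :=
    Finset.le_add_sum_Ico_of_succ_le_add (by omega) fun n hn => by
      have hn : m ≤ n := (Finset.mem_Ico.mp hn).1
      linarith [h1 n hn (h_above n hn)]
  rw [Finset.sum_sub_distrib, ← Finset.mul_sum, Finset.Ico_add_one_right_eq_Icc] at hdrift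
  rw [Finset.Ico_add_one_right_eq_Icc] at hbig
  linarith [hu (m' + 1), hα m' hm']

/-- Existence of a return time below level `δ`: if `u` is nonnegative and satisfies the
drift condition `u(n+1) ≤ u(n) − β·γ(n) + α(n)` whenever `u(n) > δ` (for `n ≥ m`),
with `∑ γ(n) = ∞` and the partial sums of `α` from `m` bounded above, then
`u(n) ≤ δ` for some `n ≥ m`. -/
theorem exists_return_below_delta
    (u : ℕ → ℝ) (hu : ∀ n, 0 ≤ u n)
    (δ β : ℝ) (hδ : 0 < δ) (hβ : 0 < β) (m : ℕ)
    (γ : ℕ → ℝ) (hγ : ∀ n, 0 ≤ γ n)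
    (hγdiv : Tendsto (fun m' => ∑ n ∈ Finset.range m', γ n) atTop atTop)
    (α : ℕ → ℝ) (A : ℝ)
    (hα : ∀ m' ≥ m, ∑ n ∈ Finset.Icc m m', α n ≤ A)
    (h1 : ∀ n ≥ m, δ < u n → u (n + 1) ≤ u n - β * γ n + α n) :
    ∃ n ≥ m, u n ≤ δ :=
  exists_return_below_delta_general u hu δ β hβ m γ hγdiv α A hα h1
end

section
/- Let K ≥ 1 and let f : ℝ^K → ℝ be concave and continuous, and let x* ∈ ℝ^K be a strict global maximizer of f, i.e., f(z) < f(x*) for all z ≠ x*. Then for every δ > 0 there exists β > 0 such that f(z) ≤ f(x*) − β·‖z − x*‖ for all z with ‖z − x*‖ ≥ δ, where ‖·‖ is the Euclidean norm. -/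
/-- Lemma 7: if `f : ℝ^K → ℝ` is concave and continuous with strict global maximizer `x*`,
then for every `δ > 0` there is `β > 0` with `f z ≤ f x* − β·‖z − x*‖` whenever
`‖z − x*‖ ≥ δ`. -/
theorem concave_linear_gap
    (K : ℕ) (hK : 1 ≤ K)
    (f : EuclideanSpace ℝ (Fin K) → ℝ)
    (hconc : ConcaveOn ℝ Set.univ f) (hcont : Continuous f)
    (xstar : EuclideanSpace ℝ (Fin K))
    (hmax : ∀ z, z ≠ xstar → f z < f xstar) :
    ∀ δ : ℝ, 0 < δ → ∃ β : ℝ, 0 < β ∧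
      ∀ z : EuclideanSpace ℝ (Fin K), δ ≤ ‖z - xstar‖ →
        f z ≤ f xstar - β * ‖z - xstar‖ := by
  intro δ hδ
  haveI : Nonempty (Fin K) := ⟨⟨0, hK⟩⟩
  haveI : Nontrivial (EuclideanSpace ℝ (Fin K)) := by
    refine ⟨EuclideanSpace.single ⟨0, hK⟩ (1 : ℝ), 0, ?_⟩
    intro h
    have := congrArg (fun v => v ⟨0, hK⟩) h
    simp [EuclideanSpace.single_apply] at this
  have hsne : (Metric.sphere xstar δ).Nonempty :=
    NormedSpace.sphere_nonempty.mpr hδ.le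
  have hscomp : IsCompact (Metric.sphere xstar δ) := isCompact_sphere _ _
  obtain ⟨w₀, hw₀s, hw₀min⟩ :=
    hscomp.exists_isMinOn hsne ((continuous_const.sub hcont).continuousOn)
  set m : ℝ := f xstar - f w₀ with hm
  have hw₀ne : w₀ ≠ xstar := by
    intro h
    have := Metric.mem_sphere.mp hw₀s
    rw [h] at this
    simp at this
    exact hδ.ne' this.symm
  have hmpos : 0 < m := sub_pos.mpr (hmax _ hw₀ne)
  refine ⟨m / δ, div_pos hmpos hδ, fun z hz => ?_⟩
  have hd : 0 < ‖z - xstar‖ := lt_of_lt_of_le hδ hz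
  set d := ‖z - xstar‖ with hdd
  set t : ℝ := δ / d with ht
  have htpos : 0 < t := div_pos hδ hd
  have htle : t ≤ 1 := by
    rw [ht, div_le_one hd]; exact hz
  set w : EuclideanSpace ℝ (Fin K) := t • z + (1 - t) • xstar with hw
  have hwsphere : w ∈ Metric.sphere xstar δ := by
    have : w - xstar = t • (z - xstar) := by
      rw [hw]; module
    rw [Metric.mem_sphere, dist_eq_norm, this, norm_smul,
      Real.norm_of_nonneg htpos.le]
    show t * ‖z - xstar‖ = δ
    rw [ht, ← hdd, div_mul_cancel₀ _ hd.ne']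
  have hconcw : t * f z + (1 - t) * f xstar ≤ f w :=
    hconc.2 (Set.mem_univ z) (Set.mem_univ xstar) htpos.le
      (by linarith) (by ring)
  have hmin : m ≤ f xstar - f w := hw₀min hwsphere
  -- m ≤ f xstar - f w ≤ t * (f xstar - f z)
  have key : m ≤ t * (f xstar - f z) := by nlinarith
  have hkey2 : m * d ≤ δ * (f xstar - f z) := by
    rw [ht] at key
    have h3 := mul_le_mul_of_nonneg_right key hd.le
    calc m * d ≤ δ / d * (f xstar - f z) * d := h3
      _ = δ * (f xstar - f z) := by field_simp
  have h2 : m / δ * d ≤ f xstar - f z := by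
    rw [div_mul_eq_mul_div, div_le_iff₀ hδ]
    nlinarith
  linarith
end

section
/- Let E be a real normed vector space, let f : E → ℝ be concave, let x* ∈ E, δ > 0, and α ∈ ℝ. Assume f(v) ≤ f(x*) − α for every v ∈ E with ‖v − x*‖ = δ. Then for every z ∈ E with ‖z − x*‖ ≥ δ, f(z) ≤ f(x*) − (α/δ)·‖z − x*‖. -/
/-!
Put `r = ‖z - x*‖` and `t = δ / r ∈ (0, 1]`. The point `v` at parameter `t` on the segment from
`x*` to `z` lies on the sphere of radius `δ`, and concavity along that segment gives
`t · (f z - f x*) ≤ f v - f x* ≤ -α`; dividing by `t` yields the linear bound.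
-/

open AffineMap

theorem ConcaveOn.add_mul_sub_le_apply_lineMap {E : Type*} [AddCommGroup E] [Module ℝ E]
    {s : Set E} {f : E → ℝ} (hf : ConcaveOn ℝ s f) {x z : E} (hx : x ∈ s) (hz : z ∈ s)
    {t : ℝ} (ht₀ : 0 ≤ t) (ht₁ : t ≤ 1) :
    f x + t * (f z - f x) ≤ f (lineMap x z t) := by
  have h := hf.2 hx hz (sub_nonneg.2 ht₁) ht₀ (sub_add_cancel 1 t)
  rw [smul_eq_mul, smul_eq_mul] at h
  rw [lineMap_apply_module]
  linarith

/-- Extension step in Lemma 7: if a concave `f` satisfies `f v ≤ f x* − α` on the sphere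
of radius `δ` around `x*`, then `f z ≤ f x* − (α/δ)·‖z − x*‖` for all `z` with
`‖z − x*‖ ≥ δ`. -/
theorem concave_gap_extends_linearly
    {E : Type*} [NormedAddCommGroup E] [NormedSpace ℝ E]
    (f : E → ℝ) (hconc : ConcaveOn ℝ Set.univ f)
    (xstar : E) (δ α : ℝ) (hδ : 0 < δ)
    (hsphere : ∀ v : E, ‖v - xstar‖ = δ → f v ≤ f xstar - α) :
    ∀ z : E, δ ≤ ‖z - xstar‖ → f z ≤ f xstar - (α / δ) * ‖z - xstar‖ := by
  intro z hz
  set r := ‖z - xstar‖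
  have hr : 0 < r := hδ.trans_le hz
  set t := δ / r
  have ht : 0 < t := div_pos hδ hr
  have hv : ‖lineMap xstar z t - xstar‖ = δ := by
    rw [← dist_eq_norm, dist_lineMap_left, Real.norm_of_nonneg ht.le, dist_eq_norm',
      div_mul_cancel₀ δ hr.ne']
  have hsecant : t * (f z - f xstar) ≤ -α := by
    have hchord := hconc.add_mul_sub_le_apply_lineMap (Set.mem_univ xstar) (Set.mem_univ z) ht.le
      (div_le_one_of_le₀ hz hr.le)
    linarith [hsphere _ hv]
  calc f z ≤ f xstar + -α / t := by linarith [(le_div_iff₀' ht).2 hsecant]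
    _ = f xstar - (α / δ) * r := by simp only [t]; field_simp; ring
end
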